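/- arXiv:2306.02133 — 2 statements merged into one kernel-verified Lean document; each statement's English description precedes it below -/
import Mathlib

section
/- Let G be the geometric graph of ℝ (d = 1) with vertices u₁ = 0, u₂ = 3, u₃ = 4 and edges (u₁,u₂), (u₂,u₃), and let H be the geometric graph of ℝ with vertices v₁ = 0, v₂ = 4 and the single edge (v₁,v₂). Then the geometric realizations of G and H, as subsets of ℝ, are both equal to the segment [0,4] (so the Hausdorff distance between the realizations is 0), yet for all cost coefficients C_V > 0, C_E > 0 one has GGD(G,H) > 0. Consequently, the GGD is not bounded above by the Hausdorff distance between the geometric realizations of the two graphs. -/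
open scoped BigOperators

noncomputable section

/-- An inexact matching between a geometric graph with vertices indexed by
`Fin m` and one with vertices indexed by `Fin n`, encoded as a function
`π : Fin m → Option (Fin n)`: `π i = none` means the vertex `u_i` is deleted
(matched to the dummy vertex `ε_V`), and the matching restricts to a bijection
between the non-deleted vertices, i.e. `π` is injective on the indices mapped
to `some` values; a vertex `v_j` of `H` not in the image is deleted
(`π⁻¹(v_j) = ε_V`). -/
def IsMatching {m n : ℕ} (π : Fin m → Option (Fin n)) : Prop :=
  ∀ ⦃i i' : Fin m⦄ ⦃j : Fin n⦄, π i = some j → π i' = some j → i = i'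

/-- The cost of an inexact matching `π` between the geometric graph `G` with
vertex positions `u : Fin m → X` and edge set `EG` and the geometric graph `H`
with vertex positions `v : Fin n → X` and edge set `EH`:
the sum of the vertex-translation costs `C_V·|u − π(u)|` over non-deleted
vertices, the edge-translation costs `C_E·||e| − |π(e)||` over edges of `G`
whose endpoints are matched to the endpoints of an edge of `H`, and the
edge-deletion costs `C_E·|e|`, resp. `C_E·|f|`, over the remaining edges of
`G`, resp. of `H`. -/
def matchCost {X : Type*} [MetricSpace X] {m n : ℕ}
    (u : Fin m → X) (EG : Finset (Fin m × Fin m))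
    (v : Fin n → X) (EH : Finset (Fin n × Fin n))
    (CV CE : ℝ) (π : Fin m → Option (Fin n)) : ℝ :=
  (∑ i : Fin m, Option.elim (π i) 0 fun j => CV * dist (u i) (v j)) +
  (∑ e ∈ EG,
    match π e.1, π e.2 with
    | some j₁, some j₂ =>
        if (j₁, j₂) ∈ EH then CE * |dist (u e.1) (u e.2) - dist (v j₁) (v j₂)|
        else CE * dist (u e.1) (u e.2)
    | _, _ => CE * dist (u e.1) (u e.2)) +
  (∑ f ∈ EH,
    if ∃ i₁ i₂ : Fin m, π i₁ = some f.1 ∧ π i₂ = some f.2 ∧ (i₁, i₂) ∈ EG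
    then 0 else CE * dist (v f.1) (v f.2))

/-- The geometric graph distance: the least cost of an inexact matching
between the two geometric graphs. -/
def GGD {X : Type*} [MetricSpace X] {m n : ℕ}
    (u : Fin m → X) (EG : Finset (Fin m × Fin m))
    (v : Fin n → X) (EH : Finset (Fin n × Fin n))
    (CV CE : ℝ) : ℝ :=
  sInf { c : ℝ | ∃ π : Fin m → Option (Fin n),
    IsMatching π ∧ c = matchCost u EG v EH CV CE π }

/-- The geometric realization of a geometric graph of `ℝ` with vertex
positions `u` and edge set `E`: the union of the vertices and of the straight
segments realizing the edges. -/
def realization {m : ℕ} (u : Fin m → ℝ) (E : Finset (Fin m × Fin m)) : Set ℝ :=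
  Set.range u ∪ ⋃ e ∈ E, segment ℝ (u e.1) (u e.2)

lemma aux_term_nonneg {X : Type*} [MetricSpace X] {n : ℕ} {CE : ℝ} (hCE : 0 ≤ CE)
    (a b : X) (v : Fin n → X) (EH : Finset (Fin n × Fin n))
    (o₁ o₂ : Option (Fin n)) :
    0 ≤ (match o₁, o₂ with
    | some j₁, some j₂ =>
        if (j₁, j₂) ∈ EH then CE * |dist a b - dist (v j₁) (v j₂)|
        else CE * dist a b
    | _, _ => CE * dist a b) := by
  cases o₁ <;> cases o₂ <;> dsimp only
  · positivity
  · positivity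
  · positivity
  · split
    · positivity
    · positivity

lemma aux_key (CV CE : ℝ) (hCV : 0 ≤ CV) (hCE : 0 < CE)
    (π : Fin 3 → Option (Fin 2)) :
    CE ≤ matchCost ![(0:ℝ),3,4] {(0,1),(1,2)} ![(0:ℝ),4] {(0,1)} CV CE π := by
  unfold matchCost
  rw [show ({(0,1),(1,2)} : Finset (Fin 3 × Fin 3)) = insert (0,1) {(1,2)} from rfl,
      Finset.sum_insert (by decide), Finset.sum_singleton, Finset.sum_singleton]
  dsimp only
  have hS1 : 0 ≤ ∑ i : Fin 3,
      Option.elim (π i) 0 fun j => CV * dist ((![(0:ℝ),3,4]) i) ((![(0:ℝ),4]) j) := by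
    refine Finset.sum_nonneg fun i _ => ?_
    cases h : π i
    · simp
    · simp only [Option.elim]
      positivity
  by_cases hP : ∃ i₁ i₂ : Fin 3, π i₁ = some ((0:Fin 2),(1:Fin 2)).1 ∧
      π i₂ = some ((0:Fin 2),(1:Fin 2)).2 ∧ (i₁, i₂) ∈ ({(0,1),(1,2)} : Finset (Fin 3 × Fin 3))
  · obtain ⟨i₁, i₂, hp1, hp2, hE⟩ := hP
    rw [if_pos ⟨i₁, i₂, hp1, hp2, hE⟩]
    dsimp only at hp1 hp2
    simp only [Finset.mem_insert, Finset.mem_singleton, Prod.ext_iff] at hE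
    rcases hE with ⟨rfl, rfl⟩ | ⟨rfl, rfl⟩
    · rw [hp1, hp2]
      rcases hq : π 2 with _ | j
      · simp only [Real.dist_eq, Matrix.cons_val_zero, Matrix.cons_val_one, Matrix.head_cons,
          Matrix.cons_val_two, Matrix.tail_cons, Finset.mem_singleton, Prod.ext_iff,
            Nat.succ_eq_add_one, Nat.reduceAdd, Fin.sum_univ_three, hp1, hp2, hq, Option.elim] at hS1 ⊢
        norm_num
        linarith
      · fin_cases j <;>
        · simp only [Real.dist_eq, Matrix.cons_val_zero, Matrix.cons_val_one, Matrix.head_cons,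
            Matrix.cons_val_two, Matrix.tail_cons, Finset.mem_singleton, Prod.ext_iff,
            Nat.succ_eq_add_one, Nat.reduceAdd, Fin.sum_univ_three, hp1, hp2, hq, Option.elim] at hS1 ⊢
          norm_num
          ring_nf
          linarith
    · rw [hp1, hp2]
      rcases hq : π 0 with _ | j
      · simp only [Real.dist_eq, Matrix.cons_val_zero, Matrix.cons_val_one, Matrix.head_cons,
          Matrix.cons_val_two, Matrix.tail_cons, Finset.mem_singleton, Prod.ext_iff,
            Nat.succ_eq_add_one, Nat.reduceAdd, Fin.sum_univ_three, hp1, hp2, hq, Option.elim] at hS1 ⊢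
        norm_num
        ring_nf
        linarith
      · fin_cases j <;>
        · simp only [Real.dist_eq, Matrix.cons_val_zero, Matrix.cons_val_one, Matrix.head_cons,
            Matrix.cons_val_two, Matrix.tail_cons, Finset.mem_singleton, Prod.ext_iff,
            Nat.succ_eq_add_one, Nat.reduceAdd, Fin.sum_univ_three, hp1, hp2, hq, Option.elim] at hS1 ⊢
          norm_num
          ring_nf
          linarith
  · rw [if_neg hP]
    have h01 := aux_term_nonneg (X := ℝ) hCE.le ((![(0:ℝ),3,4]) 0) ((![(0:ℝ),3,4]) 1)
        ![(0:ℝ),4] {(0,1)} (π 0) (π 1)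
    have h12 := aux_term_nonneg (X := ℝ) hCE.le ((![(0:ℝ),3,4]) 1) ((![(0:ℝ),3,4]) 2)
        ![(0:ℝ),4] {(0,1)} (π 1) (π 2)
    have h4 : dist ((![(0:ℝ),4]) 0) ((![(0:ℝ),4]) 1) = 4 := by
      norm_num [Real.dist_eq]
    rw [h4]
    linarith

/-- Let `G` be the geometric graph of `ℝ` with vertices `u₁ = 0, u₂ = 3,
u₃ = 4` and edges `(u₁,u₂), (u₂,u₃)`, and `H` the geometric graph of `ℝ` with
vertices `v₁ = 0, v₂ = 4` and the single edge `(v₁,v₂)`.  The geometric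
realizations of `G` and `H` are both equal to the segment `[0,4]` (so the
Hausdorff distance between the realizations is `0`), yet for all cost
coefficients `C_V > 0`, `C_E > 0` one has `GGD(G,H) > 0`.  Hence the GGD is
not bounded above by the Hausdorff distance between the realizations. -/
theorem ggd_not_hausdorff_stable_realization :
    realization ![(0 : ℝ), 3, 4] {(0, 1), (1, 2)} = segment ℝ (0 : ℝ) 4 ∧
    realization ![(0 : ℝ), 4] {(0, 1)} = segment ℝ (0 : ℝ) 4 ∧
    ∀ CV CE : ℝ, 0 < CV → 0 < CE →
      0 < GGD ![(0 : ℝ), 3, 4] {(0, 1), (1, 2)} ![(0 : ℝ), 4] {(0, 1)} CV CE := by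
  refine ⟨?_, ?_, ?_⟩
  · unfold realization
    rw [segment_eq_Icc (by norm_num : (0:ℝ) ≤ 4)]
    apply Set.Subset.antisymm
    · rintro x (⟨i, rfl⟩ | hx)
      · fin_cases i <;> simp <;> norm_num
      · simp only [Set.mem_iUnion] at hx
        obtain ⟨e, he, hx⟩ := hx
        fin_cases he
        · rw [show segment ℝ ((![(0:ℝ),3,4]) ((0:Fin 3),(1:Fin 3)).1) ((![(0:ℝ),3,4]) ((0:Fin 3),(1:Fin 3)).2)
              = Set.Icc (0:ℝ) 3 by
            simp only [Matrix.cons_val_zero, Matrix.cons_val_one, Matrix.head_cons]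
            exact segment_eq_Icc (by norm_num)] at hx
          rw [Set.mem_Icc] at hx ⊢
          constructor <;> linarith [hx.1, hx.2]
        · rw [show segment ℝ ((![(0:ℝ),3,4]) ((1:Fin 3),(2:Fin 3)).1) ((![(0:ℝ),3,4]) ((1:Fin 3),(2:Fin 3)).2)
              = Set.Icc (3:ℝ) 4 by
            simp only [Matrix.cons_val_one, Matrix.head_cons, Matrix.cons_val_two, Matrix.tail_cons]
            exact segment_eq_Icc (by norm_num)] at hx
          rw [Set.mem_Icc] at hx ⊢
          constructor <;> linarith [hx.1, hx.2]
    · intro x hx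
      rcases le_total x 3 with h | h
      · refine Set.mem_union_right _ ?_
        refine Set.mem_biUnion (Finset.mem_insert_self _ _) ?_
        simp [segment_eq_Icc (by norm_num : (0:ℝ) ≤ 3)]
        exact ⟨hx.1, h⟩
      · refine Set.mem_union_right _ ?_
        refine Set.mem_biUnion (Finset.mem_insert_of_mem (Finset.mem_singleton_self _)) ?_
        simp [segment_eq_Icc (by norm_num : (3:ℝ) ≤ 4)]
        exact ⟨h, hx.2⟩
  · unfold realization
    rw [segment_eq_Icc (by norm_num : (0:ℝ) ≤ 4)]
    apply Set.Subset.antisymm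
    · rintro x (⟨i, rfl⟩ | hx)
      · fin_cases i <;> simp <;> norm_num
      · simp only [Set.mem_iUnion] at hx
        obtain ⟨e, he, hx⟩ := hx
        fin_cases he
        simpa [segment_eq_Icc (by norm_num : (0:ℝ) ≤ 4)] using hx
    · intro x hx
      refine Set.mem_union_right _ ?_
      refine Set.mem_biUnion (Finset.mem_singleton_self _) ?_
      simpa [segment_eq_Icc (by norm_num : (0:ℝ) ≤ 4)] using hx
  · intro CV CE hCV hCE
    have hne : { c : ℝ | ∃ π : Fin 3 → Option (Fin 2),
        IsMatching π ∧ c = matchCost ![(0:ℝ),3,4] {(0,1),(1,2)} ![(0:ℝ),4] {(0,1)} CV CE π }.Nonempty := by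
      exact ⟨_, fun _ => none, fun i i' j h => by simp at h, rfl⟩
    have : CE ≤ GGD ![(0:ℝ),3,4] {(0,1),(1,2)} ![(0:ℝ),4] {(0,1)} CV CE := by
      apply le_csInf hne
      rintro c ⟨π, hπ, rfl⟩
      exact aux_key CV CE hCV.le hCE π
    linarith
end
end

section
/- Let G be the ordered geometric graph of ℝ² with vertices u₁ = (2,2), u₂ = (0,0), u₃ = (2,0), u₄ = (0,2), u₅ = (1,1) and edges (u₁,u₄), (u₁,u₅), (u₂,u₃), (u₂,u₅), and let H be the ordered geometric graph of ℝ² with vertices v₁ = (0,0), v₂ = (2,2), v₃ = (0,2), v₄ = (2,0), v₅ = (1,1) and edges (v₁,v₃), (v₁,v₅), (v₂,v₄), (v₂,v₅). Then for all cost coefficients C_V > 0, C_E > 0, GMD(G,H) = 0, although G and H are distinct geometric graphs (their edge sets, as sets of segments of ℝ², differ: for instance the segment from (0,0) to (2,0) is an edge of G but not of H). Hence the GMD does not satisfy the separability axiom and is only a pseudo-metric on ordered geometric graphs. -/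
open scoped BigOperators

noncomputable section

/-- The `k`th entry of the adjacency-length row vector `E^G_i` of an ordered
geometric graph with vertex positions `u` and adjacency `adj`:
it is `|u_i - u_k|` if `(u_i, u_k)` is an edge, and `0` otherwise. -/
def edgeRow {d m : ℕ} (u : Fin m → EuclideanSpace ℝ (Fin d))
    (adj : Fin m → Fin m → Bool) (i k : Fin m) : ℝ :=
  if adj i k then dist (u i) (u k) else 0

/-- The ground distance matrix `d_{i,j}` of the graph mover's distance between
ordered geometric graphs `(u, adjG)` (with `m` vertices) and `(v, adjH)` (with
`n` vertices); indices `m+1` and `n+1` (here `Fin.last`) are the dummy supplier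
and dummy consumer. -/
def groundDist {d m n : ℕ} (u : Fin m → EuclideanSpace ℝ (Fin d))
    (adjG : Fin m → Fin m → Bool) (v : Fin n → EuclideanSpace ℝ (Fin d))
    (adjH : Fin n → Fin n → Bool) (CV CE : ℝ)
    (i : Fin (m + 1)) (j : Fin (n + 1)) : ℝ :=
  if hi : (i : ℕ) < m then
    if hj : (j : ℕ) < n then
      CV * dist (u ⟨i, hi⟩) (v ⟨j, hj⟩) +
        CE * ∑ k : Fin (min m n),
          |edgeRow u adjG ⟨i, hi⟩ (Fin.castLE (min_le_left m n) k) -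
            edgeRow v adjH ⟨j, hj⟩ (Fin.castLE (min_le_right m n) k)|
    else CE * ∑ k, |edgeRow u adjG ⟨i, hi⟩ k|
  else
    if hj : (j : ℕ) < n then CE * ∑ k, |edgeRow v adjH ⟨j, hj⟩ k|
    else 0

/-- A feasible flow for the GMD transportation problem between an ordered
geometric graph with `m` vertices and one with `n` vertices: all real vertices
have weight `1`, the dummy supplier has weight `n` and the dummy consumer has
weight `m`. -/
def IsFlow (m n : ℕ) (f : Fin (m + 1) → Fin (n + 1) → ℝ) : Prop :=
  (∀ i j, 0 ≤ f i j) ∧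
  (∀ i : Fin (m + 1), ∑ j, f i j = if (i : ℕ) < m then (1 : ℝ) else (n : ℝ)) ∧
  (∀ j : Fin (n + 1), ∑ i, f i j = if (j : ℕ) < n then (1 : ℝ) else (m : ℝ))

/-- The graph mover's distance between two ordered geometric graphs of `ℝ^d`:
the least total cost `∑ f_{i,j} d_{i,j}` over all feasible flows. -/
def GMD {d m n : ℕ} (u : Fin m → EuclideanSpace ℝ (Fin d))
    (adjG : Fin m → Fin m → Bool) (v : Fin n → EuclideanSpace ℝ (Fin d))
    (adjH : Fin n → Fin n → Bool) (CV CE : ℝ) : ℝ :=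
  sInf { c : ℝ | ∃ f, IsFlow m n f ∧
    c = ∑ i, ∑ j, f i j * groundDist u adjG v adjH CV CE i j }

/-- A point of the Euclidean plane `ℝ²`. -/
def pt (a b : ℝ) : EuclideanSpace ℝ (Fin 2) := WithLp.toLp 2 ![a, b]

/-- The vertex sequence `u₁ = (2,2), u₂ = (0,0), u₃ = (2,0), u₄ = (0,2),
u₅ = (1,1)` of the ordered geometric graph `G`. -/
def uG : Fin 5 → EuclideanSpace ℝ (Fin 2) := ![pt 2 2, pt 0 0, pt 2 0, pt 0 2, pt 1 1]

/-- The adjacency of `G`: edges `(u₁,u₄), (u₁,u₅), (u₂,u₃), (u₂,u₅)`. -/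
def adjG : Fin 5 → Fin 5 → Bool := fun i k =>
  decide (((i : ℕ), (k : ℕ)) ∈
    [(0, 3), (3, 0), (0, 4), (4, 0), (1, 2), (2, 1), (1, 4), (4, 1)])

/-- The vertex sequence `v₁ = (0,0), v₂ = (2,2), v₃ = (0,2), v₄ = (2,0),
v₅ = (1,1)` of the ordered geometric graph `H`. -/
def vH : Fin 5 → EuclideanSpace ℝ (Fin 2) := ![pt 0 0, pt 2 2, pt 0 2, pt 2 0, pt 1 1]

/-- The adjacency of `H`: edges `(v₁,v₃), (v₁,v₅), (v₂,v₄), (v₂,v₅)`. -/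
def adjH : Fin 5 → Fin 5 → Bool := fun i k =>
  decide (((i : ℕ), (k : ℕ)) ∈
    [(0, 2), (2, 0), (0, 4), (4, 0), (1, 3), (3, 1), (1, 4), (4, 1)])

/-!
Under the relabelling `σ = (1 2)(3 4)` the vertex positions of `G` and `H` agree, `u_i = v_{σ(i)}`.
The ground distance compares the rows `E^G_i` and `E^H_j` entry by entry at the *same* index `k`,
without relabelling the columns, and here `E^G_i = E^H_{σ(i)}` although the edge sets differ; so the
flow sending `u_i` to `v_{σ(i)}` and the dummy to the dummy costs nothing. The segment from `(0,0)`
to `(2,0)` is not an edge of `H`, since the only vertices of `H` on the `x`-axis are `v₁` and `v₄`,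
which are not adjacent.
-/

lemma groundDist_nonneg {d m n : ℕ} (u : Fin m → EuclideanSpace ℝ (Fin d))
    (adjG : Fin m → Fin m → Bool) (v : Fin n → EuclideanSpace ℝ (Fin d))
    (adjH : Fin n → Fin n → Bool) {CV CE : ℝ} (hCV : 0 ≤ CV) (hCE : 0 ≤ CE)
    (i : Fin (m + 1)) (j : Fin (n + 1)) : 0 ≤ groundDist u adjG v adjH CV CE i j := by
  unfold groundDist
  split_ifs <;> positivity

lemma GMD_eq_zero_of_isFlow {d m n : ℕ} {u : Fin m → EuclideanSpace ℝ (Fin d)}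
    {adjG : Fin m → Fin m → Bool} {v : Fin n → EuclideanSpace ℝ (Fin d)}
    {adjH : Fin n → Fin n → Bool} {CV CE : ℝ} (hCV : 0 ≤ CV) (hCE : 0 ≤ CE)
    {f : Fin (m + 1) → Fin (n + 1) → ℝ} (hf : IsFlow m n f)
    (hcost : ∑ i, ∑ j, f i j * groundDist u adjG v adjH CV CE i j = 0) :
    GMD u adjG v adjH CV CE = 0 := by
  have hzero : (0 : ℝ) ∈ { c : ℝ | ∃ f, IsFlow m n f ∧
      c = ∑ i, ∑ j, f i j * groundDist u adjG v adjH CV CE i j } := ⟨f, hf, hcost.symm⟩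
  have hlb : (0 : ℝ) ∈ lowerBounds { c : ℝ | ∃ f, IsFlow m n f ∧
      c = ∑ i, ∑ j, f i j * groundDist u adjG v adjH CV CE i j } := by
    rintro c ⟨g, hg, rfl⟩
    exact Finset.sum_nonneg fun i _ ↦ Finset.sum_nonneg fun j _ ↦
      mul_nonneg (hg.1 i j) (groundDist_nonneg u adjG v adjH hCV hCE i j)
  exact le_antisymm (csInf_le ⟨0, hlb⟩ hzero) (le_csInf ⟨0, hzero⟩ hlb)

def permFlow {n : ℕ} (σ : Equiv.Perm (Fin n)) : Fin (n + 1) → Fin (n + 1) → ℝ :=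
  Fin.lastCases (Fin.lastCases n fun _ ↦ 0)
    fun i ↦ Fin.lastCases 0 fun j ↦ if σ i = j then 1 else 0

lemma isFlow_permFlow {n : ℕ} (σ : Equiv.Perm (Fin n)) : IsFlow n n (permFlow σ) := by
  refine ⟨fun i j ↦ ?_, fun i ↦ ?_, fun j ↦ ?_⟩
  · induction i using Fin.lastCases <;> induction j using Fin.lastCases <;>
      simp only [permFlow, Fin.lastCases_last, Fin.lastCases_castSucc] <;> positivity
  · induction i using Fin.lastCases <;> simp [permFlow, Fin.sum_univ_castSucc]
  · induction j using Fin.lastCases <;>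
      simp [permFlow, Fin.sum_univ_castSucc, ← Equiv.eq_symm_apply]

lemma groundDist_castSucc_castSucc {d m n : ℕ} (u : Fin m → EuclideanSpace ℝ (Fin d))
    (adjG : Fin m → Fin m → Bool) (v : Fin n → EuclideanSpace ℝ (Fin d))
    (adjH : Fin n → Fin n → Bool) (CV CE : ℝ) (i : Fin m) (j : Fin n) :
    groundDist u adjG v adjH CV CE i.castSucc j.castSucc =
      CV * dist (u i) (v j) + CE * ∑ k : Fin (min m n),
        |edgeRow u adjG i (Fin.castLE (min_le_left m n) k) -
          edgeRow v adjH j (Fin.castLE (min_le_right m n) k)| := by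
  simp [groundDist]

lemma groundDist_last_last {d m n : ℕ} (u : Fin m → EuclideanSpace ℝ (Fin d))
    (adjG : Fin m → Fin m → Bool) (v : Fin n → EuclideanSpace ℝ (Fin d))
    (adjH : Fin n → Fin n → Bool) (CV CE : ℝ) :
    groundDist u adjG v adjH CV CE (Fin.last m) (Fin.last n) = 0 := by
  simp [groundDist]

lemma permFlow_cost_eq_zero {d n : ℕ} {u v : Fin n → EuclideanSpace ℝ (Fin d)}
    {adjG adjH : Fin n → Fin n → Bool} (CV CE : ℝ) {σ : Equiv.Perm (Fin n)}
    (hpos : ∀ i, u i = v (σ i)) (hrow : ∀ i k, edgeRow u adjG i k = edgeRow v adjH (σ i) k) :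
    ∑ i, ∑ j, permFlow σ i j * groundDist u adjG v adjH CV CE i j = 0 := by
  refine Finset.sum_eq_zero fun i _ ↦ Finset.sum_eq_zero fun j _ ↦ ?_
  induction i using Fin.lastCases <;> induction j using Fin.lastCases
  case last.last => rw [groundDist_last_last, mul_zero]
  case cast.cast i j =>
    simp only [permFlow, Fin.lastCases_castSucc, groundDist_castSucc_castSucc]
    split_ifs with hij
    · simp [← hij, hpos, hrow]
    · rw [zero_mul]
  all_goals simp [permFlow]

theorem GMD_eq_zero_of_perm {d n : ℕ} {u v : Fin n → EuclideanSpace ℝ (Fin d)}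
    {adjG adjH : Fin n → Fin n → Bool} {CV CE : ℝ} (hCV : 0 ≤ CV) (hCE : 0 ≤ CE)
    (σ : Equiv.Perm (Fin n)) (hpos : ∀ i, u i = v (σ i))
    (hrow : ∀ i k, edgeRow u adjG i k = edgeRow v adjH (σ i) k) :
    GMD u adjG v adjH CV CE = 0 :=
  GMD_eq_zero_of_isFlow hCV hCE (isFlow_permFlow σ) (permFlow_cost_eq_zero CV CE hpos hrow)

def matchGH : Equiv.Perm (Fin 5) := Equiv.swap 0 1 * Equiv.swap 2 3

lemma uG_eq_vH_matchGH (i : Fin 5) : uG i = vH (matchGH i) := by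
  fin_cases i <;> rfl

lemma dist_pt (a b c d : ℝ) : dist (pt a b) (pt c d) = √((a - c) ^ 2 + (b - d) ^ 2) := by
  simp [pt, EuclideanSpace.dist_eq, Fin.sum_univ_two, Real.dist_eq, sq_abs]

lemma edgeRow_uG_eq_edgeRow_vH_matchGH (i k : Fin 5) :
    edgeRow uG adjG i k = edgeRow vH adjH (matchGH i) k := by
  have hadj : adjH (matchGH i) k = adjG i k := by revert i k; decide
  rw [edgeRow, edgeRow, hadj, ← uG_eq_vH_matchGH]
  fin_cases i <;> fin_cases k <;> norm_num [adjG, uG, vH, dist_pt]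

lemma snd_eq_zero_of_mem_segment {a b : ℝ} {p : EuclideanSpace ℝ (Fin 2)}
    (hp : p ∈ segment ℝ (pt a 0) (pt b 0)) : p 1 = 0 := by
  obtain ⟨s, t, -, -, -, rfl⟩ := hp
  simp [pt]

lemma eq_zero_or_eq_three_of_vH_snd_eq_zero {i : Fin 5} (hi : vH i 1 = 0) : i = 0 ∨ i = 3 := by
  revert hi
  fin_cases i <;> simp [vH, pt, Fin.ext_iff]

/-- For the two ordered geometric graphs `G` and `H` above and all cost
coefficients `C_V > 0`, `C_E > 0`, one has `GMD(G,H) = 0`, although `G` and `H`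
are distinct geometric graphs: the segment from `(0,0)` to `(2,0)` is an edge
segment of `G` but not of `H`.  Hence the GMD does not satisfy the
separability axiom and is only a pseudo-metric on ordered geometric graphs. -/
theorem gmd_not_separable (CV CE : ℝ) (hCV : 0 < CV) (hCE : 0 < CE) :
    GMD uG adjG vH adjH CV CE = 0 ∧
    (∃ i k, adjG i k = true ∧
      segment ℝ (uG i) (uG k) = segment ℝ (pt 0 0) (pt 2 0)) ∧
    ¬ (∃ i k, adjH i k = true ∧
      segment ℝ (vH i) (vH k) = segment ℝ (pt 0 0) (pt 2 0)) := by
  refine ⟨GMD_eq_zero_of_perm hCV.le hCE.le matchGH uG_eq_vH_matchGH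
    edgeRow_uG_eq_edgeRow_vH_matchGH, ⟨1, 2, rfl, rfl⟩, ?_⟩
  rintro ⟨i, k, hadj, hseg⟩
  have hi := eq_zero_or_eq_three_of_vH_snd_eq_zero
    (snd_eq_zero_of_mem_segment (hseg ▸ left_mem_segment ℝ (vH i) (vH k)))
  have hk := eq_zero_or_eq_three_of_vH_snd_eq_zero
    (snd_eq_zero_of_mem_segment (hseg ▸ right_mem_segment ℝ (vH i) (vH k)))
  rcases hi with rfl | rfl <;> rcases hk with rfl | rfl <;> exact absurd hadj (by decide)
end
end
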